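/- Let ρ₀ be a pure state (Tr(ρ₀²)=1) and σ a density matrix such that ρ₀ and σ have the same orthogonal projection ϱ onto a subspace of Hermitian matrices (Hilbert–Schmidt inner product). Then d_HS(ρ₀, σ) ≤ 2√(1 − Tr(ϱ²)). -/

import Mathlib

/-!
Both `ρ₀ - ϱ` and `σ - ϱ` are orthogonal to `ϱ ∈ V` in the Hilbert–Schmidt inner product, so by
Pythagoras `d_HS(ρ₀, ϱ)² = Tr ρ₀² - Tr ϱ² = 1 - Tr ϱ²` and
`d_HS(σ, ϱ)² = Tr σ² - Tr ϱ² ≤ 1 - Tr ϱ²`, using `Tr σ² ≤ (Tr σ)² = 1` for a density matrix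
(its eigenvalues are nonnegative). The triangle inequality through `ϱ` gives the bound.
-/

open Matrix ComplexOrder

namespace Matrix

variable {n 𝕜 : Type*} [Fintype n] [RCLike 𝕜]

theorem trace_sub_mul_sub_of_trace_sub_mul_eq_zero {R : Type*} [CommRing R] {A P : Matrix n n R}
    (h : ((A - P) * P).trace = 0) :
    ((A - P) * (A - P)).trace = (A * A).trace - (P * P).trace := by
  rw [sub_mul, trace_sub, sub_eq_zero] at h
  simp only [sub_mul, mul_sub, trace_sub]
  rw [trace_mul_comm P A, h]
  ring

open scoped Matrix.Norms.Frobenius in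
theorem frobenius_norm_sq_eq_re_trace_conjTranspose_mul_self {m : Type*} [Fintype m]
    (A : Matrix m n 𝕜) : ‖A‖ ^ 2 = RCLike.re (Aᴴ * A).trace := by
  change ‖WithLp.toLp 2 fun i => WithLp.toLp 2 fun j => A i j‖ ^ 2 = _
  simp only [PiLp.norm_sq_eq_of_L2, trace, diag_apply, mul_apply, conjTranspose_apply,
    map_sum, RCLike.star_def, RCLike.conj_mul]
  rw [Finset.sum_comm]
  norm_cast

theorem IsHermitian.trace_mul_self_eq_sum_eigenvalues_sq [DecidableEq n] {A : Matrix n n 𝕜}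
    (hA : A.IsHermitian) : (A * A).trace = ∑ i, ((hA.eigenvalues i ^ 2 : ℝ) : 𝕜) := by
  conv_lhs => rw [hA.spectral_theorem, ← map_mul, Unitary.conjStarAlgAut_apply, trace_mul_cycle,
    Unitary.coe_star_mul_self, one_mul, diagonal_mul_diagonal, trace_diagonal]
  simp [sq]

theorem PosSemidef.re_trace_mul_self_le_sq_re_trace {A : Matrix n n 𝕜} (hA : A.PosSemidef) :
    RCLike.re (A * A).trace ≤ RCLike.re A.trace ^ 2 := by
  classical
  rw [hA.1.trace_mul_self_eq_sum_eigenvalues_sq, hA.1.trace_eq_sum_eigenvalues]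
  simp only [map_sum, RCLike.ofReal_re]
  exact Finset.sum_sq_le_sq_sum_of_nonneg fun i _ => hA.eigenvalues_nonneg i

open scoped Matrix.Norms.Frobenius in
theorem IsHermitian.frobenius_norm_eq_sqrt_re_trace_mul_self {A : Matrix n n 𝕜}
    (hA : A.IsHermitian) : ‖A‖ = √(RCLike.re (A * A).trace) := by
  rw [← Real.sqrt_sq (norm_nonneg A), frobenius_norm_sq_eq_re_trace_conjTranspose_mul_self, hA.eq]

open scoped Matrix.Norms.Frobenius in
theorem IsHermitian.sqrt_re_trace_sub_mul_sub_le {A B C : Matrix n n 𝕜} (hA : A.IsHermitian)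
    (hB : B.IsHermitian) (hC : C.IsHermitian) :
    √(RCLike.re ((A - C) * (A - C)).trace) ≤
      √(RCLike.re ((A - B) * (A - B)).trace) + √(RCLike.re ((C - B) * (C - B)).trace) := by
  simp only [← IsHermitian.frobenius_norm_eq_sqrt_re_trace_mul_self, hA.sub hB, hA.sub hC,
    hC.sub hB]
  exact norm_sub_rev C B ▸ norm_sub_le_norm_sub_add_norm_sub A B C

end Matrix

theorem stmt1_general {d : ℕ} (ρ₀ σ ϱ : Matrix (Fin d) (Fin d) ℂ)
    (V : Submodule ℝ (Matrix (Fin d) (Fin d) ℂ))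
    (hVH : ∀ A ∈ V, A.IsHermitian)
    (hρ₀ : ρ₀.PosSemidef)
    (hpure : Matrix.trace (ρ₀ * ρ₀) = 1)
    (hσ : σ.PosSemidef) (htσ : σ.trace = 1)
    (hϱV : ϱ ∈ V)
    (hρ₀proj : ∀ A ∈ V, Matrix.trace ((ρ₀ - ϱ) * A) = 0)
    (hσproj : ∀ A ∈ V, Matrix.trace ((σ - ϱ) * A) = 0) :
    Real.sqrt ((Matrix.trace ((ρ₀ - σ) * (ρ₀ - σ))).re) ≤
      2 * Real.sqrt (1 - (Matrix.trace (ϱ * ϱ)).re) := by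
  have hϱ : ϱ.IsHermitian := hVH ϱ hϱV
  have hρ₀ϱ : ((ρ₀ - ϱ) * (ρ₀ - ϱ)).trace.re = 1 - (ϱ * ϱ).trace.re := by
    rw [trace_sub_mul_sub_of_trace_sub_mul_eq_zero (hρ₀proj ϱ hϱV), hpure, Complex.sub_re,
      Complex.one_re]
  have hσϱ : ((σ - ϱ) * (σ - ϱ)).trace.re ≤ 1 - (ϱ * ϱ).trace.re := by
    have hσσ : (σ * σ).trace.re ≤ 1 := by
      simpa [htσ] using hσ.re_trace_mul_self_le_sq_re_trace
    rw [trace_sub_mul_sub_of_trace_sub_mul_eq_zero (hσproj ϱ hϱV), Complex.sub_re]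
    linarith
  calc √((ρ₀ - σ) * (ρ₀ - σ)).trace.re
      ≤ √((ρ₀ - ϱ) * (ρ₀ - ϱ)).trace.re + √((σ - ϱ) * (σ - ϱ)).trace.re :=
        hρ₀.1.sqrt_re_trace_sub_mul_sub_le hϱ hσ.1
    _ ≤ √(1 - (ϱ * ϱ).trace.re) + √(1 - (ϱ * ϱ).trace.re) := by
        rw [hρ₀ϱ]; gcongr
    _ = 2 * √(1 - (ϱ * ϱ).trace.re) := by ring

/-- pure target state version of the distance bound:
d_HS(ρ₀,σ) ≤ 2√(1 − Tr ϱ²). -/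
theorem stmt1 {d : ℕ} (ρ₀ σ ϱ : Matrix (Fin d) (Fin d) ℂ)
    (V : Submodule ℝ (Matrix (Fin d) (Fin d) ℂ))
    (hVH : ∀ A ∈ V, A.IsHermitian)
    (hρ₀ : ρ₀.PosSemidef) (htρ₀ : ρ₀.trace = 1)
    (hpure : Matrix.trace (ρ₀ * ρ₀) = 1)
    (hσ : σ.PosSemidef) (htσ : σ.trace = 1)
    (hϱV : ϱ ∈ V)
    (hρ₀proj : ∀ A ∈ V, Matrix.trace ((ρ₀ - ϱ) * A) = 0)
    (hσproj : ∀ A ∈ V, Matrix.trace ((σ - ϱ) * A) = 0) :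
    Real.sqrt ((Matrix.trace ((ρ₀ - σ) * (ρ₀ - σ))).re) ≤
      2 * Real.sqrt (1 - (Matrix.trace (ϱ * ϱ)).re) :=
  stmt1_general ρ₀ σ ϱ V hVH hρ₀ hpure hσ htσ hϱV hρ₀proj hσproj
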